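/- arXiv:2206.12777 — 2 statements merged into one kernel-verified Lean document; each statement's English description precedes it below -/
import Mathlib

section
/- A mixed multigraph M is cospectral with its underlying graph G(M) (i.e., N(M) and N(G(M)) have the same spectrum) if and only if every mixed cycle of M has weight 1. -/
open Complex Finset

noncomputable section

/-- The primitive sixth root of unity `ω = 1/2 + (√3/2)i`. -/
def omega6 : ℂ := ⟨1/2, Real.sqrt 3 / 2⟩

/-- A loopless undirected multigraph with vertex type `V` and edge type `E`:
each edge has a pair of distinct endpoints. -/
structure Multigraph (V E : Type) where
  ends : E → Sym2 V
  loopless : ∀ e, ¬ (ends e).IsDiag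

variable {V E : Type}

/-- A mixed multigraph with underlying multigraph `G`: each edge is either
unoriented (`none`) or oriented (`some (u, v)`, an arc from `u` to `v`),
the orientation is compatible with the endpoints, and there are no digons
(two parallel edges oriented in opposite directions). -/
structure MixedOrientation (G : Multigraph V E) where
  orient : E → Option (V × V)
  compat : ∀ e a b, orient e = some (a, b) → G.ends e = s(a, b)
  noDigon : ∀ e f a b, G.ends e = G.ends f → orient e = some (a, b) → orient f ≠ some (b, a)

/-- The underlying graph of `G`, viewed as the mixed multigraph with no oriented edges. -/
def Multigraph.triv (G : Multigraph V E) : MixedOrientation G where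
  orient := fun _ => none
  compat := fun _ _ _ h => by simp at h
  noDigon := fun _ _ _ _ _ h => by simp at h

variable [DecidableEq V]

/-- The contribution of edge `e`, traversed from `u` to `v`, to the Hermitian adjacency
matrix entry `N_{uv}` and to walk weights: `1` if `e` is unoriented, `ω` if `e` is an arc
from `u` to `v`, and `conj ω` if `e` is an arc from `v` to `u`. -/
def stepWeight {G : Multigraph V E} (M : MixedOrientation G) (e : E) (u v : V) : ℂ :=
  match M.orient e with
  | none => 1
  | some (a, _) => if a = u then omega6 else (starRingEnd ℂ) omega6

/-- The Hermitian adjacency matrix `N(M)` of a mixed multigraph: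
`N_{uv} = e{u,v} + e(u,v)·ω + e(v,u)·conj ω`. -/
def herm [Fintype V] [Fintype E] {G : Multigraph V E} (M : MixedOrientation G) :
    Matrix V V ℂ :=
  Matrix.of fun u v => ∑ e : E, if G.ends e = s(u, v) then stepWeight M e u v else 0

/-- A (mixed) cycle in the multigraph `G`: a cyclic sequence of `n ≥ 2` distinct vertices
joined by `n` distinct edges. -/
structure MixedCycle (G : Multigraph V E) where
  n : ℕ
  two_le : 2 ≤ n
  vert : ZMod n → V
  edge : ZMod n → E
  vert_inj : Function.Injective vert
  edge_inj : Function.Injective edge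
  ends_eq : ∀ i, G.ends (edge i) = s(vert i, vert (i + 1))

/-- The weight `wt(C) = ω^f · (conj ω)^b` of a mixed cycle `C` in `M`, traversed in
the direction given by its parametrization. -/
def cycleWeight {G : Multigraph V E} (M : MixedOrientation G) (C : MixedCycle G) : ℂ :=
  haveI : NeZero C.n := ⟨by have := C.two_le; omega⟩
  ∏ i : ZMod C.n, stepWeight M (C.edge i) (C.vert i) (C.vert (i + 1))

/-- The value `ν(C) = wt(C) + conj (wt(C))` of a mixed cycle. -/
def nu {G : Multigraph V E} (M : MixedOrientation G) (C : MixedCycle G) : ℂ :=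
  cycleWeight M C + (starRingEnd ℂ) (cycleWeight M C)

/-- The number of forward arcs of a mixed cycle (relative to its direction). -/
def fCount {G : Multigraph V E} (M : MixedOrientation G) (C : MixedCycle G) : ℕ :=
  haveI : NeZero C.n := ⟨by have := C.two_le; omega⟩
  (Finset.univ.filter fun i : ZMod C.n =>
    M.orient (C.edge i) = some (C.vert i, C.vert (i + 1))).card

/-- The number of backward arcs of a mixed cycle (relative to its direction). -/
def bCount {G : Multigraph V E} (M : MixedOrientation G) (C : MixedCycle G) : ℕ :=
  haveI : NeZero C.n := ⟨by have := C.two_le; omega⟩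
  (Finset.univ.filter fun i : ZMod C.n =>
    M.orient (C.edge i) = some (C.vert (i + 1), C.vert i)).card

/-- The edge set of a mixed cycle. -/
def cycleEdges [DecidableEq E] {G : Multigraph V E} (C : MixedCycle G) : Finset E :=
  haveI : NeZero C.n := ⟨by have := C.two_le; omega⟩
  Finset.image C.edge Finset.univ

/-- Reachability in `G` using only edges from the set `S`. -/
def ReachIn (G : Multigraph V E) (S : Set E) (u v : V) : Prop :=
  Relation.ReflTransGen (fun x y => ∃ e ∈ S, G.ends e = s(x, y)) u v

/-- A multigraph is connected if every two vertices are joined by a walk. -/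
def Multigraph.Connected (G : Multigraph V E) : Prop :=
  ∀ u v : V, ReachIn G Set.univ u v

/-- All entries of the diagonal `d` are sixth roots of unity `ω^i`, `0 ≤ i ≤ 5`. -/
def IsSixthRoots (d : V → ℂ) : Prop := ∀ v, ∃ i : ℕ, i ≤ 5 ∧ d v = omega6 ^ i

/-- `M''` is obtained from `M'` by a three-way switching: `N(M'') = D⁻¹ N(M') D` for
some diagonal matrix `D` whose diagonal entries are sixth roots of unity. -/
def Switching [Fintype V] [Fintype E] {G : Multigraph V E}
    (M' M'' : MixedOrientation G) : Prop :=
  ∃ d : V → ℂ, IsSixthRoots d ∧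
    herm M'' = (Matrix.diagonal d)⁻¹ * herm M' * Matrix.diagonal d

/-- `M'` is the converse of `M`: every arc of `M` is reversed. -/
def IsConverse {G : Multigraph V E} (M M' : MixedOrientation G) : Prop :=
  ∀ e, M'.orient e = Option.map Prod.swap (M.orient e)

/-- `M'` and `M''` are switching equivalent: one is obtained from the other by a
three-way switching and/or taking a converse. -/
def SwitchEquiv [Fintype V] [Fintype E] {G : Multigraph V E}
    (M' M'' : MixedOrientation G) : Prop :=
  Switching M' M'' ∨ ∃ Mc : MixedOrientation G, IsConverse M' Mc ∧ Switching Mc M''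

/-- `T` is (the edge set of) a spanning tree of `G`: it connects all vertices and
contains no cycle. -/
def IsSpanningTree (G : Multigraph V E) (T : Set E) : Prop :=
  (∀ u v : V, ReachIn G T u v) ∧ ∀ C : MixedCycle G, ¬ (∀ i, C.edge i ∈ T)

/-- `C` is a fundamental cycle with respect to the spanning tree `T`: it uses exactly
one non-tree edge. -/
def IsFundamentalCycle (G : Multigraph V E) (T : Set E) (C : MixedCycle G) : Prop :=
  ∃ e, e ∉ T ∧ ∀ i, C.edge i = e ∨ C.edge i ∈ T

/-! Both matrices are Hermitian, so equal characteristic polynomials give equal traces of all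
powers. Expanding `tr N^n` as a sum over closed walks of length `n`, each term for `N(M)` has
the modulus of the corresponding term for `N(G(M))`, which is `0` or `1`; equality of the sums
forces the terms to agree, so every closed walk, in particular every cycle, has weight `1`.

Conversely, if every cycle has weight `1` then so does every closed walk: split it at a repeated
vertex, and note that a closed walk without one is a cycle or runs along one edge and back.
Hence the weight of a walk depends only on its endpoints, and the weights `d v` of walks from a
fixed root of each component to `v` satisfy `N(M) = D⁻¹ N(G(M)) D` with `D = diag d`. -/

namespace Matrix

variable {n R : Type*} [Fintype n] [DecidableEq n]

theorem IsHermitian.trace_pow_eq_sum_roots_charpoly {A : Matrix n n ℂ} (hA : A.IsHermitian)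
    (k : ℕ) : (A ^ k).trace = (A.charpoly.roots.map (· ^ k)).sum := by
  conv_lhs => rw [hA.spectral_theorem]
  rw [← map_pow, Unitary.conjStarAlgAut_apply, trace_mul_cycle, Unitary.coe_star_mul_self,
    one_mul, diagonal_pow, trace_diagonal, hA.roots_charpoly_eq_eigenvalues, Multiset.map_map]
  rfl

theorem IsHermitian.trace_pow_eq_of_charpoly_eq {A B : Matrix n n ℂ} (hA : A.IsHermitian)
    (hB : B.IsHermitian) (h : A.charpoly = B.charpoly) (k : ℕ) :
    (A ^ k).trace = (B ^ k).trace := by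
  rw [hA.trace_pow_eq_sum_roots_charpoly, hB.trace_pow_eq_sum_roots_charpoly, h]

theorem charpoly_diagonal_inv_mul_mul_diagonal [Field R] (A : Matrix n n R) {d : n → R}
    (hd : ∀ i, d i ≠ 0) : (diagonal d⁻¹ * A * diagonal d).charpoly = A.charpoly := by
  rw [charpoly_mul_comm, ← Matrix.mul_assoc, diagonal_mul_diagonal]
  simp [mul_inv_cancel₀ (hd _)]

theorem pow_apply_eq_sum_cons [CommSemiring R] (A : Matrix n n R) (k : ℕ) (u w : n) :
    (A ^ k) u w = ∑ p : Fin k → n, if (Fin.cons u p : Fin (k + 1) → n) (Fin.last k) = w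
      then ∏ i, A ((Fin.cons u p : Fin (k + 1) → n) i.castSucc) (p i) else 0 := by
  induction k generalizing u with
  | zero => simp [one_apply]
  | succ k ih =>
    rw [pow_succ', mul_apply, ← (Fin.consEquiv fun _ => n).sum_comp, Fintype.sum_prod_type]
    refine sum_congr rfl fun x _ => ?_
    rw [ih, mul_sum]
    refine sum_congr rfl fun p _ => ?_
    simp [Fin.consEquiv, Fin.prod_univ_succ, ← Fin.succ_last]

theorem trace_pow_eq_sum_zmod [CommSemiring R] (A : Matrix n n R) (k : ℕ) [NeZero k] :
    (A ^ k).trace = ∑ p : ZMod k → n, ∏ i, A (p i) (p (i + 1)) := by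
  obtain ⟨k, rfl⟩ : ∃ m, k = m + 1 := Nat.exists_eq_succ_of_ne_zero (NeZero.ne k)
  show _ = ∑ p : Fin (k + 1) → n, ∏ i, A (p i) (p (i + 1))
  simp only [trace, diag, pow_apply_eq_sum_cons]
  rw [sum_comm]
  refine sum_congr rfl fun p _ => ?_
  rw [Fin.prod_univ_castSucc, Fin.last_add_one, mul_comm]
  simp [Fin.prod_univ_succ, Fin.coeSucc_eq_succ]

end Matrix

open ComplexOrder in
theorem Complex.eq_of_sum_eq_of_norm_le {ι : Type*} {s : Finset ι} {f g : ι → ℂ}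
    (hg : ∀ i ∈ s, 0 ≤ g i) (hfg : ∀ i ∈ s, ‖f i‖ ≤ ‖g i‖)
    (h : ∑ i ∈ s, f i = ∑ i ∈ s, g i) : ∀ i ∈ s, f i = g i := by
  have hg_re : ∀ i ∈ s, (g i).re = ‖g i‖ := fun i hi => re_eq_norm.mpr (hg i hi)
  have hre_le : ∀ i ∈ s, (f i).re ≤ (g i).re := fun i hi =>
    (re_le_norm (f i)).trans ((hfg i hi).trans (hg_re i hi).ge)
  have hre : ∀ i ∈ s, (f i).re = (g i).re :=
    (sum_eq_sum_iff_of_le hre_le).mp (by simpa only [re_sum] using congrArg re h)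
  intro i hi
  have hf : 0 ≤ f i := re_eq_norm.mp <| le_antisymm (re_le_norm _) <| by
    rw [hre i hi, hg_re i hi]; exact hfg i hi
  exact Complex.ext (hre i hi) <| by
    rw [← (nonneg_iff.mp hf).2, ← (nonneg_iff.mp (hg i hi)).2]

theorem norm_omega6 : ‖omega6‖ = 1 := by
  have h : Complex.normSq omega6 = 1 := by
    rw [normSq_apply]
    show (1 / 2 : ℝ) * (1 / 2) + √3 / 2 * (√3 / 2) = 1
    nlinarith [Real.mul_self_sqrt (show (0 : ℝ) ≤ 3 by norm_num)]
  rwa [normSq_eq_norm_sq, pow_eq_one_iff_of_nonneg (norm_nonneg _) two_ne_zero] at h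

namespace Multigraph

omit [DecidableEq V]

variable {G : Multigraph V E}

theorem ne_of_ends_eq {e : E} {u v : V} (h : G.ends e = s(u, v)) : u ≠ v := by
  rintro rfl
  exact G.loopless e (h ▸ Sym2.mk_isDiag_iff.mpr rfl)

/-- A walk `vert 0, edge 0, vert 1, …, vert len`; `vert` is arbitrary beyond `len`. -/
structure Walk (G : Multigraph V E) where
  len : ℕ
  vert : ℕ → V
  edge : Fin len → E
  adj : ∀ i : Fin len, G.ends (edge i) = s(vert i, vert (i + 1))

namespace Walk

def nil (u : V) : G.Walk := ⟨0, fun _ => u, Fin.elim0, fun i => i.elim0⟩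

@[simps]
def single {e : E} {u v : V} (h : G.ends e = s(u, v)) : G.Walk where
  len := 1
  vert t := if t = 0 then u else v
  edge _ := e
  adj i := by simpa [Fin.fin_one_eq_zero i] using h

@[simps]
def append (W₁ W₂ : G.Walk) (h : W₁.vert W₁.len = W₂.vert 0) : G.Walk where
  len := W₁.len + W₂.len
  vert t := if t < W₁.len then W₁.vert t else W₂.vert (t - W₁.len)
  edge := Fin.append W₁.edge W₂.edge
  adj := Fin.addCases
    (fun i => by
      rcases (Nat.succ_le_of_lt i.isLt).lt_or_eq with hi | hi
      · simpa [hi] using W₁.adj i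
      · simpa [← hi, ← h] using W₁.adj i)
    (fun i => by simpa [add_assoc] using W₂.adj i)

@[simps]
def reverse (W : G.Walk) : G.Walk where
  len := W.len
  vert t := W.vert (W.len - t)
  edge i := W.edge i.rev
  adj i := by
    rw [W.adj, Sym2.eq_swap, Fin.val_rev]
    congr 2; omega

@[simps]
def take (W : G.Walk) (k : ℕ) (hk : k ≤ W.len) : G.Walk :=
  ⟨k, W.vert, fun i => W.edge (Fin.castLE hk i), fun _ => W.adj _⟩

@[simps]
def drop (W : G.Walk) (k : ℕ) : G.Walk where
  len := W.len - k
  vert t := W.vert (k + t)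
  edge i := W.edge ⟨k + i, by omega⟩
  adj i := by simpa [add_assoc] using W.adj ⟨k + i, _⟩

theorem append_vert_zero (W₁ W₂ : G.Walk) (h : W₁.vert W₁.len = W₂.vert 0) :
    (W₁.append W₂ h).vert 0 = W₁.vert 0 := by
  rcases Nat.eq_zero_or_pos W₁.len with h0 | h0
  · simp [h0, ← h]
  · simp [h0]

theorem edge_injective_of_injOn_vert {W : G.Walk} (h3 : 3 ≤ W.len) (hW : W.vert W.len = W.vert 0)
    (hv : Set.InjOn W.vert (Set.Iio W.len)) : Function.Injective W.edge := by
  have hnext : ∀ t < W.len, W.vert (t + 1) = W.vert (if t + 1 = W.len then 0 else t + 1) := by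
    intro t _
    split_ifs with h
    · rw [h, hW]
    · rfl
  intro x y hxy
  have hends := (W.adj x).symm.trans (hxy ▸ W.adj y)
  rw [hnext x x.isLt, hnext y y.isLt] at hends
  have hlt : ∀ t < W.len, (if t + 1 = W.len then 0 else t + 1) < W.len := by
    intro t ht
    split_ifs <;> omega
  rcases Sym2.eq_iff.mp hends with ⟨h1, -⟩ | ⟨h1, h2⟩
  · exact Fin.ext (hv x.isLt y.isLt h1)
  · have e1 := hv x.isLt (hlt y y.isLt) h1
    have e2 := hv (hlt x x.isLt) y.isLt h2
    have := x.isLt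
    have := y.isLt
    split_ifs at e1 e2 <;> omega

theorem exists_lt_vert_eq_of_not_injOn {W : G.Walk} (h : ¬Set.InjOn W.vert (Set.Iio W.len)) :
    ∃ i j, i < j ∧ j < W.len ∧ W.vert i = W.vert j := by
  simp only [Set.InjOn, Set.mem_Iio, not_forall] at h
  obtain ⟨i, hi, j, hj, hij, hne⟩ := h
  rcases Nat.lt_or_gt_of_ne hne with h | h
  exacts [⟨i, j, h, hj, hij⟩, ⟨j, i, h, hi, hij.symm⟩]

end Walk

def walkSetoid (G : Multigraph V E) : Setoid V where
  r u v := ∃ W : G.Walk, W.vert 0 = u ∧ W.vert W.len = v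
  iseqv :=
    { refl := fun u => ⟨Walk.nil u, rfl, rfl⟩
      symm := fun ⟨W, h₀, h₁⟩ => ⟨W.reverse, by simpa using h₁, by simpa using h₀⟩
      trans := fun ⟨W₁, h₀, h₁⟩ ⟨W₂, h₂, h₃⟩ =>
        ⟨W₁.append W₂ (h₁.trans h₂.symm), by rw [Walk.append_vert_zero, h₀], by simpa using h₃⟩ }

end Multigraph

section StepWeight

variable {G : Multigraph V E} (M : MixedOrientation G)

theorem norm_stepWeight (e : E) (u v : V) : ‖stepWeight M e u v‖ = 1 := by
  unfold stepWeight
  split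
  · simp
  · split_ifs <;> simp [norm_omega6]

theorem stepWeight_swap {e : E} {u v : V} (h : G.ends e = s(u, v)) :
    stepWeight M e v u = starRingEnd ℂ (stepWeight M e u v) := by
  unfold stepWeight
  rcases ho : M.orient e with _ | ⟨a, b⟩
  · simp
  · have huv := G.ne_of_ends_eq h
    rcases Sym2.eq_iff.mp ((M.compat e a b ho).symm.trans h) with ⟨rfl, -⟩ | ⟨rfl, -⟩
    · simp [huv]
    · simp [huv.symm]

@[simp]
theorem stepWeight_triv (e : E) (u v : V) : stepWeight G.triv e u v = 1 := rfl

theorem stepWeight_mul_stepWeight_swap {e : E} {u v : V} (h : G.ends e = s(u, v)) :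
    stepWeight M e u v * stepWeight M e v u = 1 := by
  rw [stepWeight_swap M h, mul_conj, normSq_eq_norm_sq, norm_stepWeight]
  norm_num

variable [Fintype V] [Fintype E]

theorem isHermitian_herm : (herm M).IsHermitian := by
  ext u v
  simp only [herm, Matrix.conjTranspose_apply, Matrix.of_apply, star_sum, Sym2.eq_swap (a := v)]
  refine sum_congr rfl fun e _ => ?_
  split_ifs with h
  · rw [stepWeight_swap M h, RCLike.star_def, Complex.conj_conj]
  · exact star_zero _

theorem trace_herm_pow (n : ℕ) [NeZero n] :
    (herm M ^ n).trace = ∑ p : ZMod n → V, ∑ ε : ZMod n → E, ∏ i,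
      if G.ends (ε i) = s(p i, p (i + 1)) then stepWeight M (ε i) (p i) (p (i + 1)) else 0 := by
  rw [Matrix.trace_pow_eq_sum_zmod]
  exact sum_congr rfl fun p _ => Fintype.prod_sum _

open ComplexOrder in
theorem cycleWeight_eq_one_of_charpoly_eq
    (h : (herm M).charpoly = (herm G.triv).charpoly) (C : MixedCycle G) : cycleWeight M C = 1 := by
  have : NeZero C.n := ⟨by have := C.two_le; omega⟩
  have htr := (isHermitian_herm M).trace_pow_eq_of_charpoly_eq (isHermitian_herm G.triv) h C.n
  simp only [trace_herm_pow, ← Fintype.sum_prod_type'] at htr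
  have key := Complex.eq_of_sum_eq_of_norm_le ?nonneg ?norm htr (C.vert, C.edge) (mem_univ _)
  case nonneg =>
    intro x _
    exact prod_nonneg fun i _ => by split_ifs <;> simp
  case norm =>
    intro x _
    simp only [norm_prod]
    refine (prod_congr rfl fun i _ => ?_).le
    split_ifs <;> simp [norm_stepWeight]
  simpa [C.ends_eq, cycleWeight] using key

end StepWeight

namespace Multigraph.Walk

variable {G : Multigraph V E} (M : MixedOrientation G)

def weight (W : G.Walk) : ℂ := ∏ i, stepWeight M (W.edge i) (W.vert i) (W.vert (i + 1))

theorem norm_weight (W : G.Walk) : ‖W.weight M‖ = 1 := by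
  simp [weight, norm_stepWeight]

theorem weight_single {e : E} {u v : V} (h : G.ends e = s(u, v)) :
    (single h).weight M = stepWeight M e u v := by
  refine (Fin.prod_univ_one (M := ℂ) _).trans ?_
  simp

theorem weight_append (W₁ W₂ : G.Walk) (h : W₁.vert W₁.len = W₂.vert 0) :
    (W₁.append W₂ h).weight M = W₁.weight M * W₂.weight M := by
  refine (Fin.prod_univ_add (a := W₁.len) (b := W₂.len) _).trans ?_
  congr 1 <;> refine prod_congr rfl fun i _ => ?_
  · rcases (Nat.succ_le_of_lt i.isLt).lt_or_eq with hi | hi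
    · simp [hi]
    · simp [← hi, ← h]
  · simp [add_assoc]

theorem weight_reverse (W : G.Walk) : W.reverse.weight M = starRingEnd ℂ (W.weight M) := by
  rw [weight, weight, map_prod]
  refine Fintype.prod_equiv Fin.revPerm _ _ fun i => ?_
  rw [Fin.revPerm_apply, ← stepWeight_swap M (W.adj (i.rev : Fin W.len)), Fin.val_rev]
  have hi : (i : ℕ) < W.len := i.isLt
  have hlen : W.reverse.len = W.len := rfl
  simp only [reverse_vert]
  congr 2; omega

theorem weight_take_mul_weight_drop (W : G.Walk) {k : ℕ} (hk : k ≤ W.len) :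
    (W.take k hk).weight M * (W.drop k).weight M = W.weight M := by
  obtain ⟨n, vert, edge, adj⟩ := W
  obtain ⟨m, rfl⟩ := Nat.exists_eq_add_of_le hk
  simp only [weight, take, drop]
  rw [Fin.prod_univ_add]
  exact congrArg _ (Fin.prod_congr' _ (show m = k + m - k by omega)).symm

variable {M}

theorem weight_eq_one_of_len_eq_two (W : G.Walk) (h2 : W.len = 2)
    (hW : W.vert W.len = W.vert 0) (he : ¬Function.Injective W.edge) : W.weight M = 1 := by
  obtain ⟨n, vert, edge, adj⟩ := W
  dsimp only at h2 hW he
  subst h2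
  have he01 : edge 0 = edge 1 := by
    by_contra h
    exact he fun x y hxy => by fin_cases x <;> fin_cases y <;> simp_all [eq_comm]
  have h := stepWeight_mul_stepWeight_swap M (adj 0)
  simp_all [weight, Fin.prod_univ_two]

theorem weight_eq_one_of_injOn_of_injective (H : ∀ C : MixedCycle G, cycleWeight M C = 1) (W : G.Walk)
    (h2 : 2 ≤ W.len) (hW : W.vert W.len = W.vert 0) (hv : Set.InjOn W.vert (Set.Iio W.len))
    (he : Function.Injective W.edge) : W.weight M = 1 := by
  obtain ⟨n, vert, edge, adj⟩ := W
  obtain ⟨k, rfl⟩ : ∃ k, n = k + 2 := ⟨n - 2, by simp only at h2; omega⟩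
  have hnext : ∀ i : Fin (k + 2), vert (i + 1 : ℕ) = vert (i + 1 : Fin (k + 2)) := by
    intro i
    rw [Fin.val_add_one]
    split_ifs with hi
    · simpa [hi] using hW
    · rfl
  let C : MixedCycle G :=
    { n := k + 2
      two_le := by omega
      vert := fun i : Fin (k + 2) => vert i
      edge := edge
      vert_inj := fun i j hij => Fin.ext (hv i.isLt j.isLt hij)
      edge_inj := he
      ends_eq := fun i : Fin (k + 2) => (adj i).trans (by rw [hnext]; rfl) }
  rw [← H C]
  exact prod_congr rfl fun i _ => by dsimp only; rw [hnext]; rfl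

theorem weight_eq_one_of_injOn (H : ∀ C : MixedCycle G, cycleWeight M C = 1) (W : G.Walk)
    (hW : W.vert W.len = W.vert 0) (hv : Set.InjOn W.vert (Set.Iio W.len)) :
    W.weight M = 1 := by
  rcases Nat.lt_or_ge W.len 2 with hlt | h2
  · obtain hlen | hlen : W.len = 0 ∨ W.len = 1 := by omega
    · have : IsEmpty (Fin W.len) := hlen ▸ Fin.isEmpty'
      simp [weight]
    · exact absurd (hlen ▸ hW).symm (G.ne_of_ends_eq (W.adj ⟨0, by omega⟩))
  by_cases he : Function.Injective W.edge
  · exact weight_eq_one_of_injOn_of_injective H W h2 hW hv he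
  · have hlen : W.len = 2 := by
      by_contra
      exact he (edge_injective_of_injOn_vert (by omega) hW hv)
    exact weight_eq_one_of_len_eq_two W hlen hW he

theorem weight_eq_one_of_closed (H : ∀ C : MixedCycle G, cycleWeight M C = 1) (W : G.Walk)
    (hW : W.vert W.len = W.vert 0) : W.weight M = 1 := by
  induction hn : W.len using Nat.strong_induction_on generalizing W with
  | _ n ih =>
  by_cases hv : Set.InjOn W.vert (Set.Iio W.len)
  · exact weight_eq_one_of_injOn H W hW hv
  obtain ⟨i, j, hij, hj, hvij⟩ := exists_lt_vert_eq_of_not_injOn hv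
  let loop := (W.take j hj.le).drop i
  let rest := (W.take i (by omega)).append (W.drop j) (by simpa using hvij)
  have hloop : loop.weight M = 1 :=
    ih (j - i) (by omega) loop (by simp [loop, hvij, show i + (j - i) = j by omega]) rfl
  have hrest : rest.weight M = 1 := by
    refine ih (i + (W.len - j)) (by omega) rest ?_ rfl
    rw [append_vert_zero]
    simp [rest, show j + (W.len - j) = W.len by omega, hW]
  calc W.weight M = (W.take j hj.le).weight M * (W.drop j).weight M :=
        (weight_take_mul_weight_drop M W hj.le).symm
    _ = (W.take i (by omega)).weight M * loop.weight M * (W.drop j).weight M := by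
        rw [← weight_take_mul_weight_drop M (W.take j hj.le) (show i ≤ j by omega)]
        rfl
    _ = rest.weight M * loop.weight M := by rw [weight_append]; ring
    _ = 1 := by rw [hloop, hrest, one_mul]

theorem weight_eq_weight_of_ends_eq (H : ∀ C : MixedCycle G, cycleWeight M C = 1)
    {W₁ W₂ : G.Walk} (h₀ : W₁.vert 0 = W₂.vert 0) (h₁ : W₁.vert W₁.len = W₂.vert W₂.len) :
    W₁.weight M = W₂.weight M := by
  have hloop := weight_eq_one_of_closed H (W₁.append W₂.reverse (by simpa using h₁))
    (by rw [append_vert_zero]; simpa using h₀.symm)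
  rw [weight_append, weight_reverse] at hloop
  calc W₁.weight M = W₁.weight M * (starRingEnd ℂ (W₂.weight M) * W₂.weight M) := by
        rw [conj_mul', norm_weight]; simp
    _ = W₂.weight M := by rw [← mul_assoc, hloop, one_mul]

end Multigraph.Walk

section Potential

open Multigraph

variable {G : Multigraph V E} {M : MixedOrientation G}

theorem exists_potential_of_forall_cycleWeight_eq_one
    (H : ∀ C : MixedCycle G, cycleWeight M C = 1) :
    ∃ d : V → ℂ, (∀ v, d v ≠ 0) ∧
      ∀ e u v, G.ends e = s(u, v) → stepWeight M e u v = (d u)⁻¹ * d v := by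
  let s := G.walkSetoid
  -- `W v` runs from the chosen representative of the class of `v` to `v`.
  choose W hW₀ hW₁ using fun v => Quotient.mk_out (s := s) v
  have hd : ∀ v, (W v).weight M ≠ 0 := fun v =>
    norm_ne_zero_iff.mp (by rw [Walk.norm_weight]; exact one_ne_zero)
  refine ⟨fun v => (W v).weight M, hd, fun e u v h => ?_⟩
  dsimp only
  have huv : (⟦u⟧ : Quotient s) = ⟦v⟧ := Quotient.sound ⟨.single h, by simp, by simp⟩
  have key := Walk.weight_eq_weight_of_ends_eq H
    (W₁ := (W u).append (.single h) (by simp [hW₁])) (W₂ := W v)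
    (by rw [Walk.append_vert_zero, hW₀, hW₀, huv]) (by simp [hW₁])
  rw [Walk.weight_append, Walk.weight_single] at key
  rw [← key, inv_mul_cancel_left₀ (hd u)]

theorem herm_eq_diagonal_inv_mul_mul_diagonal [Fintype V] [Fintype E] {d : V → ℂ}
    (hd : ∀ e u v, G.ends e = s(u, v) → stepWeight M e u v = (d u)⁻¹ * d v) :
    herm M = Matrix.diagonal d⁻¹ * herm G.triv * Matrix.diagonal d := by
  ext u v
  simp only [herm, Matrix.mul_diagonal, Matrix.diagonal_mul, Matrix.of_apply, sum_mul, mul_sum]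
  refine sum_congr rfl fun e _ => ?_
  split_ifs with h
  · simp [hd e u v h]
  · simp

end Potential

/-- a mixed multigraph is cospectral with its underlying graph iff every
mixed cycle has weight `1`. -/
theorem cospectral_underlying_iff [Fintype V] [Fintype E] {G : Multigraph V E}
    (M : MixedOrientation G) :
    (herm M).charpoly = (herm G.triv).charpoly ↔
      ∀ C : MixedCycle G, cycleWeight M C = 1 := by
  refine ⟨cycleWeight_eq_one_of_charpoly_eq M, fun H => ?_⟩
  obtain ⟨d, hd0, hd⟩ := exists_potential_of_forall_cycleWeight_eq_one H
  rw [herm_eq_diagonal_inv_mul_mul_diagonal hd, Matrix.charpoly_diagonal_inv_mul_mul_diagonal _ hd0]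

end
end

section
/- Let M' and M'' be two mixed trees with the same underlying graph (a tree). Then one of them can be obtained from the other by a three-way switching: there exists a diagonal matrix D with diagonal entries in {ω^i : 0 ≤ i ≤ 5} such that N(M'') = D^{-1} N(M') D. -/
open Complex Finset

noncomputable section

variable {V E : Type}

variable [DecidableEq V]

/-! Each edge `e`, traversed from `u`, contributes `ω ^ k` to `N(M)` with `k ∈ ZMod 6`.
Switching by `D = diag (ω ^ p v)` turns `N(M')` into `N(M'')` as soon as, on every edge `uv`,
`p v - p u` is the change of this exponent from `M'` to `M''`. Without mixed cycles there are no
parallel edges and the underlying simple graph is acyclic, so every edge `e` is a bridge; such a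
`p` is then the sum over all edges `e` of the change of exponent of `e`, put on the side of `e`
away from a fixed endpoint of `e`. -/

variable {G : Multigraph V E}

section Acyclic

omit [DecidableEq V]

theorem Multigraph.ne_of_ends_eq_s9 {e : E} {u v : V} (he : G.ends e = s(u, v)) : u ≠ v :=
  fun h => G.loopless e (by simp [he, h])

theorem ReachIn.symm {S : Set E} {u v : V} (h : ReachIn G S u v) : ReachIn G S v u :=
  Relation.ReflTransGen.mono (fun _ _ ⟨e, hS, he⟩ => ⟨e, hS, he.trans Sym2.eq_swap⟩) _ _ h.swap

def Multigraph.toSimpleGraph (G : Multigraph V E) : SimpleGraph V :=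
  SimpleGraph.fromEdgeSet (Set.range G.ends)

theorem Multigraph.toSimpleGraph_adj_of_ends_eq {e : E} {u v : V} (he : G.ends e = s(u, v)) :
    G.toSimpleGraph.Adj u v :=
  (SimpleGraph.fromEdgeSet_adj _).mpr ⟨⟨e, he⟩, G.ne_of_ends_eq_s9 he⟩

theorem injective_sym2_mk_succ {n : ℕ} (hn : 3 ≤ n) {f : ZMod n → V}
    (hf : Function.Injective f) : Function.Injective fun i => s(f i, f (i + 1)) := by
  intro i j hij
  rcases Sym2.eq_iff.mp hij with ⟨h, -⟩ | ⟨h₁, h₂⟩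
  · exact hf h
  · have htwo : ((2 : ℕ) : ZMod n) = 0 := by
      push_cast
      linear_combination hf h₂ - hf h₁
    have := Nat.le_of_dvd two_pos ((ZMod.natCast_eq_zero_iff 2 n).mp htwo)
    omega

theorem SimpleGraph.Walk.getVert_val_add_one {H : SimpleGraph V} {v : V} (c : H.Walk v v)
    [NeZero c.length] (i : ZMod c.length) :
    c.getVert (i + 1).val = c.getVert (i.val + 1) := by
  rw [ZMod.val_add, ZMod.val_one_eq_one_mod, Nat.add_mod_mod]
  obtain hlt | heq : i.val + 1 < c.length ∨ i.val + 1 = c.length := by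
    have := ZMod.val_lt i
    omega
  · rw [Nat.mod_eq_of_lt hlt]
  · rw [heq, Nat.mod_self, SimpleGraph.Walk.getVert_zero, SimpleGraph.Walk.getVert_length]

def MixedCycle.ofIsCycle {v : V} {c : G.toSimpleGraph.Walk v v} (hc : c.IsCycle) :
    MixedCycle G :=
  haveI : NeZero c.length := ⟨by have := hc.three_le_length; omega⟩
  have hedge : ∀ i : ZMod c.length,
      ∃ e, G.ends e = s(c.getVert i.val, c.getVert (i + 1).val) := fun i => by
    rw [c.getVert_val_add_one]
    exact ((SimpleGraph.fromEdgeSet_adj _).mp (c.adj_getVert_succ (ZMod.val_lt i))).1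
  have hvert : Function.Injective fun i : ZMod c.length => c.getVert i.val := fun i j h =>
    ZMod.val_injective _ (hc.getVert_injOn' (by have := ZMod.val_lt i; simp; omega)
      (by have := ZMod.val_lt j; simp; omega) h)
  { n := c.length
    two_le := by have := hc.three_le_length; omega
    vert := fun i => c.getVert i.val
    edge := fun i => (hedge i).choose
    vert_inj := hvert
    edge_inj := fun i j h => injective_sym2_mk_succ hc.three_le_length hvert <| by
      simpa only [(hedge _).choose_spec] using congrArg G.ends h
    ends_eq := fun i => (hedge i).choose_spec }

theorem Multigraph.isAcyclic_toSimpleGraph (h : IsEmpty (MixedCycle G)) :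
    G.toSimpleGraph.IsAcyclic :=
  fun _ _ hc => h.false (MixedCycle.ofIsCycle hc)

theorem Multigraph.ends_injective (h : IsEmpty (MixedCycle G)) : Function.Injective G.ends := by
  intro e f hef
  by_contra hne
  obtain ⟨⟨u, v⟩, huv⟩ := Quot.exists_rep (G.ends e)
  replace huv : G.ends e = s(u, v) := huv.symm
  have huv' := G.ne_of_ends_eq_s9 huv
  refine h.false ⟨2, le_rfl, ![u, v], ![e, f], ?_, ?_, ?_⟩
  · intro i j
    fin_cases i <;> fin_cases j <;> simp [huv', huv'.symm] <;> rfl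
  · intro i j
    fin_cases i <;> fin_cases j <;> simp [hne, Ne.symm hne] <;> rfl
  · intro i
    fin_cases i
    · exact huv
    · exact (hef ▸ huv).trans Sym2.eq_swap

theorem Multigraph.reachable_deleteEdges_of_reachIn (hinj : Function.Injective G.ends)
    {e : E} {u v : V} (h : ReachIn G {e}ᶜ u v) :
    (G.toSimpleGraph.deleteEdges {G.ends e}).Reachable u v := by
  rw [SimpleGraph.reachable_iff_reflTransGen]
  refine Relation.ReflTransGen.mono (fun x y ⟨f, hf, hxy⟩ => ?_) _ _ h
  rw [SimpleGraph.deleteEdges_adj, Set.mem_singleton_iff, ← hxy]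
  exact ⟨G.toSimpleGraph_adj_of_ends_eq hxy, hinj.ne hf⟩

theorem Multigraph.not_reachIn_compl_singleton (h : IsEmpty (MixedCycle G)) {e : E} {u v : V}
    (he : G.ends e = s(u, v)) : ¬ ReachIn G {e}ᶜ u v := fun hr => by
  have hbridge := SimpleGraph.isAcyclic_iff_forall_adj_isBridge.mp
    (G.isAcyclic_toSimpleGraph h) (G.toSimpleGraph_adj_of_ends_eq he)
  exact SimpleGraph.isBridge_iff.mp hbridge
    (he ▸ G.reachable_deleteEdges_of_reachIn (G.ends_injective h) hr)

end Acyclic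

theorem omega6_sq : omega6 ^ 2 = omega6 - 1 := by
  have h3 : Real.sqrt 3 * Real.sqrt 3 = 3 := Real.mul_self_sqrt (by norm_num)
  apply Complex.ext <;> simp [omega6, sq] <;> linarith

theorem omega6_pow_six : omega6 ^ 6 = 1 := by
  have h3 : omega6 ^ 3 = -1 := by linear_combination (omega6 + 1) * omega6_sq
  linear_combination (omega6 ^ 3 - 1) * h3

theorem conj_omega6 : starRingEnd ℂ omega6 = omega6 ^ 5 := by
  have hnorm : omega6 * starRingEnd ℂ omega6 = 1 := by
    have h3 : Real.sqrt 3 * Real.sqrt 3 = 3 := Real.mul_self_sqrt (by norm_num)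
    rw [Complex.mul_conj, Complex.ofReal_eq_one, Complex.normSq_apply]
    simp only [omega6]
    linear_combination (1 / 4 : ℝ) * h3
  linear_combination omega6 ^ 5 * hnorm - starRingEnd ℂ omega6 * omega6_pow_six

def omegaChar : AddChar (ZMod 6) ℂ := AddChar.zmodChar 6 omega6_pow_six

def stepExponent (M : MixedOrientation G) (e : E) (u : V) : ZMod 6 :=
  match M.orient e with
  | none => 0
  | some (a, _) => if a = u then 1 else -1

theorem stepWeight_eq_omegaChar (M : MixedOrientation G) (e : E) (u v : V) :
    stepWeight M e u v = omegaChar (stepExponent M e u) := by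
  unfold stepWeight stepExponent
  split
  · rfl
  · split_ifs
    · exact (pow_one omega6).symm
    · exact conj_omega6

theorem stepExponent_swap (M : MixedOrientation G) {e : E} {u v : V}
    (he : G.ends e = s(u, v)) : stepExponent M e v = -stepExponent M e u := by
  have huv := G.ne_of_ends_eq_s9 he
  unfold stepExponent
  split
  · simp
  · next a b ho =>
    rcases Sym2.eq_iff.mp ((M.compat e a b ho).symm.trans he) with ⟨rfl, rfl⟩ | ⟨rfl, rfl⟩
    · simp [huv]
    · simp [huv.symm]

theorem switching_of_potential [Fintype V] [Fintype E] {M' M'' : MixedOrientation G}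
    (p : V → ZMod 6)
    (hp : ∀ e u v, G.ends e = s(u, v) → p v - p u = stepExponent M'' e u - stepExponent M' e u) :
    Switching M' M'' := by
  refine ⟨fun v => omegaChar (p v), fun v => ⟨(p v).val, Nat.le_of_lt_succ (ZMod.val_lt _), rfl⟩,
    ?_⟩
  have hinv : (Matrix.diagonal fun v => omegaChar (p v))⁻¹ =
      Matrix.diagonal fun v => omegaChar (-p v) := by
    refine Matrix.inv_eq_left_inv ?_
    rw [Matrix.diagonal_mul_diagonal, ← Matrix.diagonal_one]
    simp only [← AddChar.map_add_eq_mul, neg_add_cancel, AddChar.map_zero_eq_one]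
  ext u v
  simp only [hinv, herm, Matrix.diagonal_mul, Matrix.mul_diagonal, Matrix.of_apply,
    Finset.mul_sum, Finset.sum_mul]
  refine Finset.sum_congr rfl fun e _ => ?_
  split_ifs with he
  · simp only [stepWeight_eq_omegaChar, ← AddChar.map_add_eq_mul]
    congr 1
    linear_combination -hp e u v he
  · simp

open Classical in
def switchingPotential [Fintype E] (M' M'' : MixedOrientation G) (v : V) : ZMod 6 :=
  ∑ e, if ReachIn G {e}ᶜ (G.ends e).out.1 v then 0
    else stepExponent M'' e (G.ends e).out.1 - stepExponent M' e (G.ends e).out.1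

theorem switchingPotential_sub [Fintype E] (h : IsEmpty (MixedCycle G))
    (M' M'' : MixedOrientation G) {e : E} {u v : V} (he : G.ends e = s(u, v)) :
    switchingPotential M' M'' v - switchingPotential M' M'' u =
      stepExponent M'' e u - stepExponent M' e u := by
  classical
  unfold switchingPotential
  rw [← Finset.sum_sub_distrib, Finset.sum_eq_single_of_mem e (Finset.mem_univ e)]
  · have hout : G.ends e = s((G.ends e).out.1, (G.ends e).out.2) := (Quot.out_eq _).symm
    rcases Sym2.eq_iff.mp (hout.symm.trans he) with ⟨ha, -⟩ | ⟨ha, -⟩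
    · rw [ha, if_neg (G.not_reachIn_compl_singleton h he), if_pos .refl]
      ring
    · rw [ha, if_pos .refl, if_neg fun hr => G.not_reachIn_compl_singleton h he hr.symm,
        stepExponent_swap M' he, stepExponent_swap M'' he]
      ring
  · intro f _ hfe
    have huv : ReachIn G {f}ᶜ u v := .single ⟨e, Ne.symm hfe, he⟩
    have hside : ∀ a, ReachIn G {f}ᶜ a v ↔ ReachIn G {f}ᶜ a u :=
      fun a => ⟨fun hr => hr.trans huv.symm, fun hr => hr.trans huv⟩
    simp only [hside, sub_self]

theorem tree_switching_general [Fintype V] [Fintype E] {G : Multigraph V E}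
    (hacyclic : IsEmpty (MixedCycle G))
    (M' M'' : MixedOrientation G) :
    Switching M' M'' :=
  switching_of_potential (switchingPotential M' M'') fun _ _ _ =>
    switchingPotential_sub hacyclic M' M''

/-- Lemma mtree: any two mixed trees with the same underlying tree are
related by a three-way switching. -/
theorem tree_switching [Fintype V] [Fintype E] {G : Multigraph V E}
    (hconn : G.Connected) (hacyclic : IsEmpty (MixedCycle G))
    (M' M'' : MixedOrientation G) :
    Switching M' M'' :=
  tree_switching_general hacyclic M' M''

end
end
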